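/- For given functions f₁(y,z) and f₂(y,z) in H¹(I×𝕋), the z-average of their product satisfies ‖(f₁f₂)_{(0,0)}‖_{L²(I)} ≤ C‖f₁‖_{L²(I×𝕋)}(‖f₂‖_{L²(I×𝕋)}^{1/2}‖∂_y f₂‖_{L²(I×𝕋)}^{1/2} + ‖f₂‖_{L²(I×𝕋)}) for an absolute constant C. Moreover, if f₂ ∈ H₀¹(I×𝕋) (vanishing at y = ±1), then ‖(f₁f₂)_{(0,0)}‖_{L²(I)} ≤ C‖f₁‖_{L²(I×𝕋)}‖f₂‖_{L²(I×𝕋)}^{1/2}‖∂_y f₂‖_{L²(I×𝕋)}^{1/2}. -/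

import Mathlib

open MeasureTheory Real Set

noncomputable section

/-- Points `(y, z)` of the cross-section `I × 𝕋`. -/
abbrev Pt2 := ℝ × ℝ

/-- The cross-section `I × 𝕋` with `I = [-1, 1]` and `𝕋 = [0, 2π)` (up to null sets). -/
def Dom2 : Set Pt2 := Icc (-1:ℝ) 1 ×ˢ Icc (0:ℝ) (2*π)

/-- Partial derivative in `y`. -/
def qy (f : Pt2 → ℝ) (p : Pt2) : ℝ := fderiv ℝ f p (1, 0)
/-- Partial derivative in `z`. -/
def qz (f : Pt2 → ℝ) (p : Pt2) : ℝ := fderiv ℝ f p (0, 1)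
/-- Laplacian on `I × 𝕋`. -/
def lap2 (f : Pt2 → ℝ) (p : Pt2) : ℝ := qy (qy f) p + qz (qz f) p
/-- Length of the gradient. -/
def grad2 (f : Pt2 → ℝ) (p : Pt2) : ℝ := Real.sqrt ((qy f p)^2 + (qz f p)^2)

/-- `L^r` norm over the cross-section. -/
def Lp2 (r : ℝ) (f : Pt2 → ℝ) : ℝ := (∫ q in Dom2, |f q| ^ r) ^ (1/r)

/-- `H¹` norm over the cross-section. -/
def H1n2 (f : Pt2 → ℝ) : ℝ := Lp2 2 f + Lp2 2 (qy f) + Lp2 2 (qz f)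

/-- Periodicity (period `2π`) in `z` for a function on the cross-section. -/
def PerZ2 (f : Pt2 → ℝ) : Prop := ∀ y z : ℝ, f (y, z + 2*π) = f (y, z)

/-- `L²(I)` norm of a function of `y` alone. -/
def L2y (g : ℝ → ℝ) : ℝ := Real.sqrt (∫ y in Icc (-1:ℝ) 1, (g y) ^ 2)

/-- The `z`-average `(f)_{(0,0)}(y) = (1/2π) ∫_𝕋 f(y,z) dz`. -/
def zAvg (f : Pt2 → ℝ) (y : ℝ) : ℝ := (1/(2*π)) * ∫ z in (0:ℝ)..(2*π), f (y, z)

/-!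
For fixed `z`, `f₂(y, z)²` differs from `f₂(y₀, z)²` by at most `∫_I |2 f₂ ∂_y f₂|(·, z)`, so
integrating in `z` and applying Cauchy–Schwarz on `I × 𝕋` gives, for all `y, y₀ ∈ I`,
`‖f₂(y, ·)‖²_{L²(𝕋)} ≤ ‖f₂(y₀, ·)‖²_{L²(𝕋)} + 2 ‖f₂‖ ‖∂_y f₂‖`.
Taking for `y₀` a point where `‖f₂(y₀, ·)‖²` is at most its mean `‖f₂‖² / 2`, or `y₀ = 1` when
`f₂` vanishes there, bounds `sup_y ‖f₂(y, ·)‖_{L²(𝕋)}`. Cauchy–Schwarz in `z` gives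
`|(f₁ f₂)_{(0,0)}(y)| ≤ (2π)⁻¹ ‖f₁(y, ·)‖ ‖f₂(y, ·)‖`, and integrating its square over `I` proves
the estimate, with `C = 1` because `(2π)² ≥ 2`.
-/

theorem integral_abs_mul_le_sqrt_mul_sqrt {α : Type*} [MeasurableSpace α] {μ : Measure α}
    {f g : α → ℝ} (hf : MemLp f 2 μ) (hg : MemLp g 2 μ) :
    ∫ a, |f a * g a| ∂μ ≤ √(∫ a, f a ^ 2 ∂μ) * √(∫ a, g a ^ 2 ∂μ) := by
  have h2 : ENNReal.ofReal 2 = 2 := by norm_num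
  have hsq (x : ℝ) : |x| ^ (2 : ℝ) = x ^ 2 := by rw [Real.rpow_two, sq_abs]
  have := integral_mul_norm_le_Lp_mul_Lq Real.HolderConjugate.two_two (h2 ▸ hf) (h2 ▸ hg)
  simpa only [Real.norm_eq_abs, hsq, ← abs_mul, ← Real.sqrt_eq_rpow] using this

theorem ContinuousOn.memLp_two_restrict {α : Type*} [TopologicalSpace α] [T2Space α]
    [MeasurableSpace α] [OpensMeasurableSpace α] {μ : Measure α} [IsFiniteMeasureOnCompacts μ]
    {f : α → ℝ} {s : Set α} (hf : ContinuousOn f s) (hs : IsCompact s) (hsm : MeasurableSet s) :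
    MemLp f 2 (μ.restrict s) :=
  (memLp_two_iff_integrable_sq (hf.aestronglyMeasurable hsm)).2
    ((hf.pow 2).integrableOn_compact hs)

theorem le_add_setIntegral_abs_of_hasDerivAt {g g' : ℝ → ℝ} {a b y₀ y : ℝ}
    (hg : ∀ t ∈ Icc a b, HasDerivAt g (g' t) t) (hg' : IntegrableOn g' (Icc a b))
    (hy₀ : y₀ ∈ Icc a b) (hy : y ∈ Icc a b) :
    g y ≤ g y₀ + ∫ t in Icc a b, |g' t| := by
  have hsub : uIcc y₀ y ⊆ Icc a b := uIcc_subset_Icc hy₀ hy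
  have hftc : ∫ t in y₀..y, g' t = g y - g y₀ :=
    intervalIntegral.integral_eq_sub_of_hasDerivAt (fun t ht => hg t (hsub ht))
      (intervalIntegrable_iff.2 (hg'.mono_set (uIoc_subset_uIcc.trans hsub)))
  have hbound : |∫ t in y₀..y, g' t| ≤ ∫ t in Icc a b, |g' t| :=
    calc |∫ t in y₀..y, g' t| ≤ ∫ t in uIoc y₀ y, |g' t| := by
          simpa only [Real.norm_eq_abs] using
            intervalIntegral.norm_integral_le_integral_norm_uIoc (f := g')
      _ ≤ ∫ t in Icc a b, |g' t| :=
          setIntegral_mono_set hg'.abs (.of_forall fun _ => abs_nonneg _)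
            (uIoc_subset_uIcc.trans hsub).eventuallyLE
  linarith [le_abs_self (∫ t in y₀..y, g' t)]

theorem isCompact_Dom2 : IsCompact Dom2 := isCompact_Icc.prod isCompact_Icc

theorem measurableSet_Dom2 : MeasurableSet Dom2 := measurableSet_Icc.prod measurableSet_Icc

theorem Lp2_two_eq_sqrt (f : Pt2 → ℝ) : Lp2 2 f = √(∫ q in Dom2, f q ^ 2) := by
  simp only [Lp2, Real.rpow_two, sq_abs, Real.sqrt_eq_rpow]

theorem Lp2_nonneg (r : ℝ) (f : Pt2 → ℝ) : 0 ≤ Lp2 r f :=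
  Real.rpow_nonneg (setIntegral_nonneg measurableSet_Dom2 fun _ _ => by positivity) _

theorem setIntegral_Dom2_abs_mul_le {f g : Pt2 → ℝ} (hf : Continuous f) (hg : Continuous g) :
    ∫ q in Dom2, |f q * g q| ≤ Lp2 2 f * Lp2 2 g := by
  rw [Lp2_two_eq_sqrt, Lp2_two_eq_sqrt]
  exact integral_abs_mul_le_sqrt_mul_sqrt
    (hf.continuousOn.memLp_two_restrict isCompact_Dom2 measurableSet_Dom2)
    (hg.continuousOn.memLp_two_restrict isCompact_Dom2 measurableSet_Dom2)

theorem setIntegral_Dom2_eq_integral_integral {h : Pt2 → ℝ} (hh : Continuous h) :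
    ∫ q in Dom2, h q = ∫ y in Icc (-1:ℝ) 1, ∫ z in (0:ℝ)..(2*π), h (y, z) := by
  have hint : IntegrableOn h Dom2 := hh.continuousOn.integrableOn_compact isCompact_Dom2
  rw [Dom2, Measure.volume_eq_prod] at hint ⊢
  rw [setIntegral_prod h hint]
  simp only [intervalIntegral.integral_of_le two_pi_pos.le, integral_Icc_eq_integral_Ioc]

theorem setIntegral_Dom2_eq_integral_integral_swap {h : Pt2 → ℝ} (hh : Continuous h) :
    ∫ q in Dom2, h q = ∫ z in (0:ℝ)..(2*π), ∫ y in Icc (-1:ℝ) 1, h (y, z) := by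
  have hint : IntegrableOn h Dom2 := hh.continuousOn.integrableOn_compact isCompact_Dom2
  rw [setIntegral_Dom2_eq_integral_integral hh]
  simp only [intervalIntegral.integral_of_le two_pi_pos.le]
  refine integral_integral_swap ?_
  rw [Measure.prod_restrict, ← Measure.volume_eq_prod]
  exact hint.mono_set (prod_mono subset_rfl Ioc_subset_Icc_self)

theorem continuous_qy {f : Pt2 → ℝ} (hf : ContDiff ℝ 1 f) : Continuous (qy f) :=
  (hf.continuous_fderiv one_ne_zero).clm_apply continuous_const

/-- `‖f(y, ·)‖²_{L²(𝕋)}`. -/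
def zEnergy (f : Pt2 → ℝ) (y : ℝ) : ℝ := ∫ z in (0:ℝ)..(2*π), f (y, z) ^ 2

theorem continuous_zEnergy {f : Pt2 → ℝ} (hf : Continuous f) : Continuous (zEnergy f) :=
  intervalIntegral.continuous_parametric_intervalIntegral_of_continuous' (hf.pow 2) _ _

theorem zEnergy_nonneg (f : Pt2 → ℝ) (y : ℝ) : 0 ≤ zEnergy f y :=
  intervalIntegral.integral_nonneg two_pi_pos.le fun _ _ => sq_nonneg _

theorem setIntegral_zEnergy {f : Pt2 → ℝ} (hf : Continuous f) :
    ∫ y in Icc (-1:ℝ) 1, zEnergy f y = Lp2 2 f ^ 2 := by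
  rw [Lp2_two_eq_sqrt,
    Real.sq_sqrt (setIntegral_nonneg measurableSet_Dom2 fun _ _ => sq_nonneg _),
    setIntegral_Dom2_eq_integral_integral (h := fun q => f q ^ 2) (hf.pow 2)]
  rfl

theorem exists_zEnergy_le_half {f : Pt2 → ℝ} (hf : Continuous f) :
    ∃ y₀ ∈ Icc (-1:ℝ) 1, zEnergy f y₀ ≤ Lp2 2 f ^ 2 / 2 := by
  have hvol : volume (Icc (-1:ℝ) 1) = 2 := by norm_num [Real.volume_Icc]
  obtain ⟨y₀, hy₀, hle⟩ := exists_le_setAverage (μ := volume) (s := Icc (-1:ℝ) 1)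
    (by simp [hvol]) (by simp [hvol]) (continuous_zEnergy hf).integrableOn_Icc
  refine ⟨y₀, hy₀, hle.trans_eq ?_⟩
  rw [setAverage_eq, setIntegral_zEnergy hf, measureReal_def, hvol]
  norm_num [div_eq_inv_mul]

theorem sq_le_add_setIntegral_abs_mul_qy {f : Pt2 → ℝ} (hf : ContDiff ℝ 1 f) {y₀ y : ℝ}
    (hy₀ : y₀ ∈ Icc (-1:ℝ) 1) (hy : y ∈ Icc (-1:ℝ) 1) (z : ℝ) :
    f (y, z) ^ 2 ≤ f (y₀, z) ^ 2 + 2 * ∫ t in Icc (-1:ℝ) 1, |f (t, z) * qy f (t, z)| := by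
  have hderiv (t : ℝ) : HasDerivAt (fun s => f (s, z) ^ 2) (2 * f (t, z) * qy f (t, z)) t := by
    have hline : HasDerivAt (fun s : ℝ => (s, z)) ((1:ℝ), (0:ℝ)) t :=
      (hasDerivAt_id t).prodMk (hasDerivAt_const t z)
    have hslice : HasDerivAt (fun s => f (s, z)) (qy f (t, z)) t :=
      (hf.differentiable one_ne_zero (t, z)).hasFDerivAt.comp_hasDerivAt t hline
    simpa [Pi.pow_def] using hslice.pow 2
  have hcont : Continuous fun t => 2 * f (t, z) * qy f (t, z) :=
    ((continuous_const.mul hf.continuous).mul (continuous_qy hf)).comp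
      (continuous_id.prodMk continuous_const)
  have := le_add_setIntegral_abs_of_hasDerivAt (fun t _ => hderiv t) hcont.integrableOn_Icc hy₀ hy
  simpa only [mul_assoc, abs_mul, abs_two, integral_const_mul] using this

theorem zEnergy_le_add {f : Pt2 → ℝ} (hf : ContDiff ℝ 1 f) {y₀ y : ℝ}
    (hy₀ : y₀ ∈ Icc (-1:ℝ) 1) (hy : y ∈ Icc (-1:ℝ) 1) :
    zEnergy f y ≤ zEnergy f y₀ + 2 * (Lp2 2 f * Lp2 2 (qy f)) := by
  have hc := hf.continuous
  have hq := continuous_qy hf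
  have hsection : Continuous fun z => 2 * ∫ t in Icc (-1:ℝ) 1, |f (t, z) * qy f (t, z)| :=
    continuous_const.mul <| continuous_parametric_integral_of_continuous
      (f := fun z t => |f (t, z) * qy f (t, z)|) (((hc.mul hq).abs).comp continuous_swap)
      isCompact_Icc
  have hslice (y' : ℝ) : Continuous fun z => f (y', z) ^ 2 :=
    (hc.comp (continuous_const.prodMk continuous_id)).pow 2
  calc zEnergy f y
      ≤ ∫ z in (0:ℝ)..(2*π),
          (f (y₀, z) ^ 2 + 2 * ∫ t in Icc (-1:ℝ) 1, |f (t, z) * qy f (t, z)|) :=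
        intervalIntegral.integral_mono_on two_pi_pos.le
          ((hslice y).intervalIntegrable _ _) (((hslice y₀).add hsection).intervalIntegrable _ _)
          fun z _ => sq_le_add_setIntegral_abs_mul_qy hf hy₀ hy z
    _ = zEnergy f y₀ + 2 * ∫ q in Dom2, |f q * qy f q| := by
        rw [intervalIntegral.integral_add ((hslice y₀).intervalIntegrable _ _)
          (hsection.intervalIntegrable _ _),
          intervalIntegral.integral_const_mul,
          setIntegral_Dom2_eq_integral_integral_swap (h := fun q => |f q * qy f q|)
            (hc.mul hq).abs]
        rfl
    _ ≤ zEnergy f y₀ + 2 * (Lp2 2 f * Lp2 2 (qy f)) := by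
        gcongr
        exact setIntegral_Dom2_abs_mul_le hc hq

theorem continuous_zAvg {f : Pt2 → ℝ} (hf : Continuous f) : Continuous (zAvg f) :=
  continuous_const.mul (intervalIntegral.continuous_parametric_intervalIntegral_of_continuous'
    (f := fun y z => f (y, z)) hf _ _)

theorem abs_zAvg_mul_le {f g : Pt2 → ℝ} (hf : Continuous f) (hg : Continuous g) (y : ℝ) :
    |zAvg (fun q => f q * g q) y| ≤ 1 / (2 * π) * (√(zEnergy f y) * √(zEnergy g y)) := by
  have hslice {h : Pt2 → ℝ} (hh : Continuous h) :
      MemLp (fun z => h (y, z)) 2 (volume.restrict (Icc 0 (2 * π))) :=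
    (hh.comp (continuous_const.prodMk continuous_id)).continuousOn.memLp_two_restrict
      isCompact_Icc measurableSet_Icc
  simp only [zAvg, zEnergy, intervalIntegral.integral_of_le two_pi_pos.le,
    ← integral_Icc_eq_integral_Ioc]
  rw [abs_mul, abs_of_pos (by positivity)]
  gcongr
  exact abs_integral_le_integral_abs.trans
    (integral_abs_mul_le_sqrt_mul_sqrt (hslice hf) (hslice hg))

theorem L2y_zAvg_mul_le {f g : Pt2 → ℝ} (hf : Continuous f) (hg : Continuous g) {M : ℝ}
    (hM : 0 ≤ M) (hg_energy : ∀ y ∈ Icc (-1:ℝ) 1, zEnergy g y ≤ (2 * π * M) ^ 2) :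
    L2y (zAvg (fun q => f q * g q)) ≤ M * Lp2 2 f := by
  have hpt : ∀ y ∈ Icc (-1:ℝ) 1, zAvg (fun q => f q * g q) y ^ 2 ≤ M ^ 2 * zEnergy f y := by
    intro y hy
    have hf₀ := zEnergy_nonneg f y
    calc zAvg (fun q => f q * g q) y ^ 2 = |zAvg (fun q => f q * g q) y| ^ 2 := (sq_abs _).symm
      _ ≤ (1 / (2 * π) * (√(zEnergy f y) * √(zEnergy g y))) ^ 2 := by
          gcongr; exact abs_zAvg_mul_le hf hg y
      _ = (1 / (2 * π)) ^ 2 * zEnergy f y * zEnergy g y := by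
          rw [mul_pow, mul_pow, Real.sq_sqrt hf₀, Real.sq_sqrt (zEnergy_nonneg g y), mul_assoc]
      _ ≤ (1 / (2 * π)) ^ 2 * zEnergy f y * (2 * π * M) ^ 2 := by gcongr; exact hg_energy y hy
      _ = M ^ 2 * zEnergy f y := by field_simp
  have hint : ∫ y in Icc (-1:ℝ) 1, zAvg (fun q => f q * g q) y ^ 2 ≤ (M * Lp2 2 f) ^ 2 := by
    rw [mul_pow, ← setIntegral_zEnergy hf, ← integral_const_mul]
    exact setIntegral_mono_on ((continuous_zAvg (hf.mul hg)).pow 2).integrableOn_Icc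
      ((continuous_zEnergy hf).const_mul _).integrableOn_Icc measurableSet_Icc hpt
  rw [L2y, ← Real.sqrt_sq (mul_nonneg hM (Lp2_nonneg 2 f))]
  exact Real.sqrt_le_sqrt hint

theorem two_le_sq_two_mul_pi : 2 ≤ (2 * π) ^ 2 := by nlinarith [pi_gt_three]

theorem zEnergy_le_sq {f : Pt2 → ℝ} (hf : ContDiff ℝ 1 f) {y : ℝ} (hy : y ∈ Icc (-1:ℝ) 1) :
    zEnergy f y ≤ (2 * π * (√(Lp2 2 f * Lp2 2 (qy f)) + Lp2 2 f)) ^ 2 := by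
  obtain ⟨y₀, hy₀, hy₀_small⟩ := exists_zEnergy_le_half hf.continuous
  have hN := Lp2_nonneg 2 f
  have hsqrt := Real.sq_sqrt (mul_nonneg hN (Lp2_nonneg 2 (qy f)))
  have hs := Real.sqrt_nonneg (Lp2 2 f * Lp2 2 (qy f))
  set s := √(Lp2 2 f * Lp2 2 (qy f))
  calc zEnergy f y ≤ Lp2 2 f ^ 2 / 2 + 2 * s ^ 2 := by linarith [zEnergy_le_add hf hy₀ hy]
    _ ≤ 2 * (s + Lp2 2 f) ^ 2 := by nlinarith [mul_nonneg hs hN]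
    _ ≤ (2 * π) ^ 2 * (s + Lp2 2 f) ^ 2 := by gcongr; exact two_le_sq_two_mul_pi
    _ = (2 * π * (s + Lp2 2 f)) ^ 2 := by ring

theorem zEnergy_le_sq_of_eq_zero {f : Pt2 → ℝ} (hf : ContDiff ℝ 1 f) (hf₁ : ∀ z, f (1, z) = 0)
    {y : ℝ} (hy : y ∈ Icc (-1:ℝ) 1) :
    zEnergy f y ≤ (2 * π * √(Lp2 2 f * Lp2 2 (qy f))) ^ 2 := by
  have hzero : zEnergy f 1 = 0 := by simp [zEnergy, hf₁]
  have hsqrt := Real.sq_sqrt (mul_nonneg (Lp2_nonneg 2 f) (Lp2_nonneg 2 (qy f)))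
  set s := √(Lp2 2 f * Lp2 2 (qy f))
  calc zEnergy f y ≤ 2 * s ^ 2 := by
        linarith [zEnergy_le_add hf (by norm_num : (1:ℝ) ∈ Icc (-1:ℝ) 1) hy]
    _ ≤ (2 * π) ^ 2 * s ^ 2 := by gcongr; exact two_le_sq_two_mul_pi
    _ = (2 * π * s) ^ 2 := by ring

/-- Estimate for the `z`-average of a product:
`‖(f₁ f₂)_{(0,0)}‖_{L²(I)} ≤ C ‖f₁‖_{L²} (‖f₂‖_{L²}^{1/2} ‖∂_y f₂‖_{L²}^{1/2} + ‖f₂‖_{L²})`,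
and without the lower-order term if `f₂` vanishes at `y = ±1`. -/
theorem stmt_12 :
    ∃ C : ℝ, 0 < C ∧
    ∀ f1 f2 : Pt2 → ℝ,
      ContDiff ℝ 1 f1 → ContDiff ℝ 1 f2 →
      PerZ2 f1 → PerZ2 f2 →
      (L2y (zAvg (fun q => f1 q * f2 q))
          ≤ C * Lp2 2 f1 * (Real.sqrt (Lp2 2 f2 * Lp2 2 (qy f2)) + Lp2 2 f2)) ∧
      ((∀ z : ℝ, f2 (1, z) = 0 ∧ f2 (-1, z) = 0) →
        L2y (zAvg (fun q => f1 q * f2 q))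
          ≤ C * Lp2 2 f1 * Real.sqrt (Lp2 2 f2 * Lp2 2 (qy f2))) := by
  refine ⟨1, one_pos, fun f1 f2 h1 h2 _ _ => ⟨?_, fun hbdry => ?_⟩⟩
  · rw [one_mul, mul_comm]
    exact L2y_zAvg_mul_le h1.continuous h2.continuous
      (add_nonneg (Real.sqrt_nonneg _) (Lp2_nonneg 2 f2)) fun y hy => zEnergy_le_sq h2 hy
  · rw [one_mul, mul_comm]
    exact L2y_zAvg_mul_le h1.continuous h2.continuous (Real.sqrt_nonneg _)
      fun y hy => zEnergy_le_sq_of_eq_zero h2 (fun z => (hbdry z).1) hy
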